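/- Upper semicontinuity of entropy along the subsequence: if μ_{k_l} → μ weakly*, and for every N there is n₀ ≥ N with H(μ | α^{n₀}) = lim_l H(μ_{k_l} | α^{n₀}) < ∞, then limsup_l h(μ_{k_l}) ≤ h(μ), where h(ν) = inf_n (1/n) H(ν | α^n). -/

import Mathlib

/-!
Since `h ≤ H(· | α^n) / n` for every `n`, the hypothesis gives
`limsup_l h(μ_l) ≤ H(ν | α^n) / n` for arbitrarily large `n`. For the shift-invariant `ν`,
`n ↦ H(ν | α^n)` is monotone and subadditive: `α^(m+n)` is the join of `α^m` and `σ^(-m) α^n`,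
and the entropy of a joint distribution is at most the sum of the entropies of its marginals
(Gibbs' inequality). By Fekete's lemma `H(ν | α^n) / n` then tends to its infimum `h(ν)`.
-/

open MeasureTheory Filter Topology ENNReal

/-- The shift map on one-sided sequences. -/
def shift : (ℕ → ℕ) → (ℕ → ℕ) := fun x n => x (n + 1)

/-- The length-`n` cylinder determined by the word `ω`. -/
def cylN (n : ℕ) (ω : Fin n → ℕ) : Set (ℕ → ℕ) := {x | ∀ m : Fin n, x m = ω m}

/-- The partition entropy `H(μ | α^n) = ∑_{[ω] ∈ α^n} −μ[ω] log μ[ω]`, valued in `[0,∞]`. -/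
noncomputable def partEnt (μ : Measure (ℕ → ℕ)) (n : ℕ) : ℝ≥0∞ :=
  ∑' ω : Fin n → ℕ, ENNReal.ofReal (-((μ (cylN n ω)).toReal * Real.log (μ (cylN n ω)).toReal))

/-- The Kolmogorov–Sinai entropy of a shift-invariant measure, computed with the generating
partition into cylinders: `h(μ) = inf_n (1/n) H(μ | α^n)`. -/
noncomputable def ent (μ : Measure (ℕ → ℕ)) : ℝ≥0∞ :=
  ⨅ n : ℕ, partEnt μ (n + 1) / (n + 1)

/-- `-log t`, truncated below at `0`. For `t ≤ 1`, `negLog t * t` is `-t log t`, also at `t = 0`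
where `negLog 0 = 0`. -/
noncomputable def negLog (t : ℝ≥0∞) : ℝ≥0∞ := ENNReal.ofReal (-Real.log t.toReal)

lemma negLog_mul_self {t : ℝ≥0∞} (ht : t ≠ ⊤) :
    negLog t * t = ENNReal.ofReal (-Real.log t.toReal * t.toReal) := by
  rw [negLog, ENNReal.ofReal_mul' ENNReal.toReal_nonneg, ENNReal.ofReal_toReal ht]

lemma negLog_le_negLog {s t : ℝ≥0∞} (hs : s ≠ 0) (hst : s ≤ t) (ht : t ≠ ⊤) :
    negLog t ≤ negLog s := by
  refine ENNReal.ofReal_le_ofReal (neg_le_neg (Real.log_le_log ?_ (ENNReal.toReal_mono ht hst)))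
  exact ENNReal.toReal_pos hs (ne_top_of_le_ne_top ht hst)

lemma negLog_tsum_mul_le {ι : Type*} (p : ι → ℝ≥0∞) (hp : ∑' i, p i ≠ ⊤) :
    negLog (∑' i, p i) * ∑' i, p i ≤ ∑' i, negLog (p i) * p i := by
  rw [← ENNReal.tsum_mul_left]
  refine ENNReal.tsum_le_tsum fun i => ?_
  rcases eq_or_ne (p i) 0 with h | h
  · simp [h]
  · exact mul_le_mul_left (negLog_le_negLog h (ENNReal.le_tsum i) hp) _

/-- This is `p log (ab / p) ≤ ab - p`, i.e. `log x ≤ x - 1` at `x = ab / p`. -/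
lemma Real.neg_log_mul_add_le {p a b : ℝ} (hp : 0 < p) (ha : 0 < a) (hb : 0 < b) :
    -Real.log p * p + p ≤ -Real.log a * p + -Real.log b * p + a * b := by
  have h := Real.log_le_sub_one_of_pos (show 0 < a * b / p by positivity)
  rw [Real.log_div (by positivity) hp.ne', Real.log_mul ha.ne' hb.ne'] at h
  have := mul_le_mul_of_nonneg_left h hp.le
  rw [show p * (a * b / p - 1) = a * b - p by field_simp] at this
  linarith

lemma negLog_mul_add_le {p a b : ℝ≥0∞} (hpa : p ≤ a) (hpb : p ≤ b) (ha : a ≤ 1) (hb : b ≤ 1) :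
    negLog p * p + p ≤ negLog a * p + negLog b * p + a * b := by
  rcases eq_or_ne p 0 with rfl | hp
  · simp
  have ha' : a ≠ ⊤ := ne_top_of_le_ne_top ENNReal.one_ne_top ha
  have hb' : b ≠ ⊤ := ne_top_of_le_ne_top ENNReal.one_ne_top hb
  have hp' : p ≠ ⊤ := ne_top_of_le_ne_top ha' hpa
  have hpos : 0 < p.toReal := ENNReal.toReal_pos hp hp'
  have hapos : 0 < a.toReal := hpos.trans_le (ENNReal.toReal_mono ha' hpa)
  have hbpos : 0 < b.toReal := hpos.trans_le (ENNReal.toReal_mono hb' hpb)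
  have hlog : ∀ {s : ℝ≥0∞}, s ≤ 1 → 0 ≤ -Real.log s.toReal := fun hs =>
    neg_nonneg.2 (Real.log_nonpos ENNReal.toReal_nonneg
      (ENNReal.toReal_le_of_le_ofReal zero_le_one (by simpa using hs)))
  have hmul : ∀ {s : ℝ≥0∞}, s ≤ 1 →
      negLog s * p = ENNReal.ofReal (-Real.log s.toReal * p.toReal) := fun hs => by
    rw [negLog, ENNReal.ofReal_mul (hlog hs), ENNReal.ofReal_toReal hp']
  calc negLog p * p + p = ENNReal.ofReal (-Real.log p.toReal * p.toReal + p.toReal) := by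
        rw [ENNReal.ofReal_add (mul_nonneg (hlog (hpa.trans ha)) hpos.le) hpos.le,
          hmul (hpa.trans ha), ENNReal.ofReal_toReal hp']
    _ ≤ ENNReal.ofReal (-Real.log a.toReal * p.toReal + -Real.log b.toReal * p.toReal
          + a.toReal * b.toReal) :=
        ENNReal.ofReal_le_ofReal (Real.neg_log_mul_add_le hpos hapos hbpos)
    _ = negLog a * p + negLog b * p + a * b := by
        rw [ENNReal.ofReal_add (by have := hlog ha; have := hlog hb; positivity) (by positivity),
          ENNReal.ofReal_add (mul_nonneg (hlog ha) hpos.le) (mul_nonneg (hlog hb) hpos.le),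
          ENNReal.ofReal_mul hapos.le, hmul ha, hmul hb, ENNReal.ofReal_toReal ha',
          ENNReal.ofReal_toReal hb']

lemma tsum_tsum_negLog_mul_le {I J : Type*} (p : I → J → ℝ≥0∞) (h : ∑' i, ∑' j, p i j ≤ 1) :
    ∑' i, ∑' j, negLog (p i j) * p i j ≤
      ∑' i, negLog (∑' j, p i j) * ∑' j, p i j + ∑' j, negLog (∑' i, p i j) * ∑' i, p i j := by
  set a := fun i => ∑' j, p i j
  set b := fun j => ∑' i, p i j
  set t := ∑' i, ∑' j, p i j
  have ha1 : ∀ i, a i ≤ 1 := fun i => (ENNReal.le_tsum i).trans h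
  have hb1 : ∀ j, b j ≤ 1 := fun j => (ENNReal.le_tsum j).trans (ENNReal.tsum_comm.trans_le h)
  -- Summing the pointwise bound gives `H(p) + t ≤ H(a) + H(b) + t²`, and `t² ≤ t`.
  have key : (∑' i, ∑' j, negLog (p i j) * p i j) + t ≤
      (∑' i, negLog (a i) * a i + ∑' j, negLog (b j) * b j) + t * t := by
    calc _ = ∑' i, ∑' j, (negLog (p i j) * p i j + p i j) := by simp only [ENNReal.tsum_add, t]
      _ ≤ ∑' i, ∑' j, (negLog (a i) * p i j + negLog (b j) * p i j + a i * b j) :=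
        ENNReal.tsum_le_tsum fun i => ENNReal.tsum_le_tsum fun j =>
          negLog_mul_add_le (ENNReal.le_tsum j) (ENNReal.le_tsum i) (ha1 i) (hb1 j)
      _ = _ := by
        simp only [ENNReal.tsum_add, ENNReal.tsum_mul_left, ENNReal.tsum_mul_right]
        rw [ENNReal.tsum_comm (f := fun i j => negLog (b j) * p i j)]
        simp only [ENNReal.tsum_mul_left, a, b, t]
        rw [ENNReal.tsum_comm (f := fun j i => p i j)]
  have htt : t * t ≤ t := mul_le_of_le_one_left' h
  exact (ENNReal.add_le_add_iff_right (ne_top_of_le_ne_top ENNReal.one_ne_top h)).1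
    (key.trans (by gcongr))

section Cylinders

variable (μ : Measure (ℕ → ℕ))

lemma cylN_eq_preimage (n : ℕ) (ω : Fin n → ℕ) :
    cylN n ω = (fun x (k : Fin n) => x k) ⁻¹' {ω} := by
  ext x; simp [cylN, funext_iff]

lemma measurableSet_cylN (n : ℕ) (ω : Fin n → ℕ) : MeasurableSet (cylN n ω) := by
  rw [cylN_eq_preimage]
  exact (measurable_pi_lambda _ fun _ => measurable_pi_apply _) (measurableSet_singleton ω)

lemma measurable_shift : Measurable shift :=
  measurable_pi_lambda _ fun _ => measurable_pi_apply _

lemma shift_iterate_apply (m : ℕ) (x : ℕ → ℕ) (k : ℕ) : shift^[m] x k = x (k + m) := by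
  induction m generalizing x with
  | zero => rfl
  | succ m ih => rw [Function.iterate_succ_apply, ih]; simp [shift, Nat.add_assoc]

lemma tsum_measure_inter_preimage_cylN {A : Set (ℕ → ℕ)} {f : (ℕ → ℕ) → (ℕ → ℕ)}
    (hf : Measurable f) (n : ℕ) :
    ∑' ω : Fin n → ℕ, μ (A ∩ f ⁻¹' cylN n ω) = μ A := by
  have hg : Measurable fun x (k : Fin n) => f x k :=
    measurable_pi_lambda _ fun k => (measurable_pi_apply _).comp hf
  have := tsum_measure_preimage_singleton (μ := μ.restrict A) Set.countable_univ
    (fun y _ => hg (measurableSet_singleton y))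
  rw [tsum_univ (fun y => μ.restrict A ((fun x (k : Fin n) => f x k) ⁻¹' {y}))] at this
  simpa [Measure.restrict_apply (hg (measurableSet_singleton _)), cylN_eq_preimage,
    Set.inter_comm, Set.preimage_preimage] using this

lemma cylN_append (m n : ℕ) (i : Fin m → ℕ) (j : Fin n → ℕ) :
    cylN (m + n) (Fin.append i j) = cylN m i ∩ shift^[m] ⁻¹' cylN n j := by
  ext x
  simp [cylN, Fin.forall_fin_add, shift_iterate_apply, Nat.add_comm]

lemma tsum_measure_cylN (n : ℕ) : ∑' ω, μ (cylN n ω) = μ Set.univ := by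
  simpa using tsum_measure_inter_preimage_cylN μ (A := Set.univ) measurable_id n

lemma partEnt_eq_tsum_negLog_mul [IsFiniteMeasure μ] (n : ℕ) :
    partEnt μ n = ∑' ω, negLog (μ (cylN n ω)) * μ (cylN n ω) := by
  refine tsum_congr fun ω => ?_
  rw [negLog_mul_self (measure_ne_top _ _), neg_mul, mul_comm]

lemma partEnt_add_eq_tsum_tsum [IsFiniteMeasure μ] (m n : ℕ) :
    partEnt μ (m + n) = ∑' (i : Fin m → ℕ) (j : Fin n → ℕ),
      negLog (μ (cylN m i ∩ shift^[m] ⁻¹' cylN n j)) * μ (cylN m i ∩ shift^[m] ⁻¹' cylN n j) := by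
  rw [partEnt_eq_tsum_negLog_mul, ← (Fin.appendEquiv m n).tsum_eq, ← ENNReal.tsum_prod]
  simp only [Fin.appendEquiv, Equiv.coe_fn_mk, cylN_append]

lemma partEnt_le_partEnt_add [IsFiniteMeasure μ] (m n : ℕ) :
    partEnt μ m ≤ partEnt μ (m + n) := by
  rw [partEnt_add_eq_tsum_tsum, partEnt_eq_tsum_negLog_mul]
  refine ENNReal.tsum_le_tsum fun i => ?_
  have hrow := tsum_measure_inter_preimage_cylN μ (A := cylN m i) (measurable_shift.iterate m) n
  have h := negLog_tsum_mul_le _ (hrow.symm ▸ measure_ne_top μ _)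
  rwa [hrow] at h

lemma monotone_partEnt [IsFiniteMeasure μ] : Monotone (partEnt μ) := by
  intro m n hmn
  obtain ⟨k, rfl⟩ := Nat.exists_eq_add_of_le hmn
  exact partEnt_le_partEnt_add μ m k

lemma partEnt_add_le [IsProbabilityMeasure μ] (hμ : MeasurePreserving shift μ μ) (m n : ℕ) :
    partEnt μ (m + n) ≤ partEnt μ m + partEnt μ n := by
  have hrow : ∀ i, ∑' j, μ (cylN m i ∩ shift^[m] ⁻¹' cylN n j) = μ (cylN m i) := fun i =>
    tsum_measure_inter_preimage_cylN μ (measurable_shift.iterate m) n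
  have hcol : ∀ j, ∑' i, μ (cylN m i ∩ shift^[m] ⁻¹' cylN n j) = μ (cylN n j) := fun j => by
    simp_rw [Set.inter_comm (cylN m _)]
    exact (tsum_measure_inter_preimage_cylN μ measurable_id m).trans
      ((hμ.iterate m).measure_preimage (measurableSet_cylN n j).nullMeasurableSet)
  have htot : ∑' i, ∑' j, μ (cylN m i ∩ shift^[m] ⁻¹' cylN n j) ≤ 1 := by
    simp only [hrow, tsum_measure_cylN, prob_le_one]
  have := tsum_tsum_negLog_mul_le _ htot
  simp only [hrow, hcol] at this
  rwa [partEnt_add_eq_tsum_tsum, partEnt_eq_tsum_negLog_mul, partEnt_eq_tsum_negLog_mul]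

end Cylinders

/-- Fekete's lemma. Once `u m < ⊤`, monotonicity and subadditivity make `u` finite, and the
real-valued `Subadditive.tendsto_lim` applies. -/
lemma ENNReal.limsup_div_le_of_subadditive {u : ℕ → ℝ≥0∞} (hmono : Monotone u)
    (hsub : ∀ m n, u (m + n) ≤ u m + u n) {m : ℕ} (hm : m ≠ 0) :
    limsup (fun n => u n / n) atTop ≤ u m / m := by
  rcases eq_or_ne (u m) ⊤ with htop | hfin
  · rw [htop, ENNReal.top_div_of_ne_top (ENNReal.natCast_ne_top m)]
    exact le_top
  have hmul : ∀ k : ℕ, u ((k + 1) * m) ≤ (k + 1) * u m := by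
    intro k
    induction k with
    | zero => simp
    | succ k ih =>
      calc u ((k + 1 + 1) * m) = u ((k + 1) * m + m) := by ring_nf
        _ ≤ (k + 1) * u m + u m := (hsub _ _).trans (by gcongr)
        _ = (↑(k + 1) + 1) * u m := by push_cast; ring
  have hfin' : ∀ n, u n ≠ ⊤ := fun n => by
    have hle : n ≤ (n + 1) * m := (Nat.le_succ n).trans (Nat.le_mul_of_pos_right _ (by omega))
    exact ne_top_of_le_ne_top (ENNReal.mul_ne_top (by simp) hfin) ((hmono hle).trans (hmul n))
  set v : ℕ → ℝ := fun n => (u n).toReal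
  have hv : Subadditive v := fun a b => by
    rw [← ENNReal.toReal_add (hfin' a) (hfin' b)]
    exact ENNReal.toReal_mono (ENNReal.add_ne_top.2 ⟨hfin' a, hfin' b⟩) (hsub a b)
  have hbdd : BddBelow (Set.range fun n => v n / n) :=
    ⟨0, by rintro _ ⟨n, rfl⟩; positivity⟩
  have hofReal : ∀ n, n ≠ 0 → ENNReal.ofReal (v n / n) = u n / n := fun n hn => by
    rw [ENNReal.ofReal_div_of_pos (by positivity), ENNReal.ofReal_toReal (hfin' n),
      ENNReal.ofReal_natCast]
  have hlim : Tendsto (fun n => u n / n) atTop (𝓝 (ENNReal.ofReal hv.lim)) :=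
    (ENNReal.tendsto_ofReal (hv.tendsto_lim hbdd)).congr' <|
      (eventually_ne_atTop 0).mono hofReal
  rw [hlim.limsup_eq, ← hofReal m hm]
  exact ENNReal.ofReal_le_ofReal (hv.lim_le_div hbdd hm)

lemma ent_le_partEnt_div (μ : Measure (ℕ → ℕ)) {n : ℕ} (hn : n ≠ 0) :
    ent μ ≤ partEnt μ n / n := by
  obtain ⟨k, rfl⟩ := Nat.exists_eq_succ_of_ne_zero hn
  rw [Nat.cast_succ]
  exact iInf_le (fun k : ℕ => partEnt μ (k + 1) / (k + 1)) k

theorem entropy_upper_semicontinuous_general (μ : ℕ → Measure (ℕ → ℕ)) (ν : Measure (ℕ → ℕ))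
    (hprobν : IsProbabilityMeasure ν) (hinvν : MeasurePreserving shift ν ν)
    (hH : ∀ N : ℕ, ∃ n₀ : ℕ, N ≤ n₀ ∧ 1 ≤ n₀ ∧ partEnt ν n₀ < ⊤ ∧
      Tendsto (fun l => partEnt (μ l) n₀) atTop (𝓝 (partEnt ν n₀))) :
    limsup (fun l => ent (μ l)) atTop ≤ ent ν := by
  have hfreq : ∃ᶠ n : ℕ in atTop, limsup (fun l => ent (μ l)) atTop ≤ partEnt ν n / n := by
    refine frequently_atTop.2 fun N => ?_
    obtain ⟨n, hNn, hn, -, hlim⟩ := hH N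
    refine ⟨n, hNn, ?_⟩
    calc limsup (fun l => ent (μ l)) atTop ≤ limsup (fun l => partEnt (μ l) n / n) atTop :=
          limsup_le_limsup (Eventually.of_forall fun l => ent_le_partEnt_div (μ l) (by omega))
      _ = partEnt ν n / n :=
          (ENNReal.Tendsto.div_const hlim (Or.inr (Nat.cast_ne_zero.2 (by omega)))).limsup_eq
  refine le_iInf fun k => ?_
  calc _ ≤ limsup (fun n : ℕ => partEnt ν n / n) atTop := le_limsup_of_frequently_le hfreq
    _ ≤ partEnt ν (k + 1) / (k + 1 : ℕ) :=
        ENNReal.limsup_div_le_of_subadditive (monotone_partEnt ν) (partEnt_add_le ν hinvν)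
          k.succ_ne_zero
    _ = partEnt ν (k + 1) / (k + 1) := by push_cast; rfl

/-- upper semicontinuity of entropy along the subsequence.  If
`μ_{k_l} → μ` weakly*, and for every `N` there is `n₀ ≥ N` with
`H(μ | α^{n₀}) = lim_l H(μ_{k_l} | α^{n₀}) < ∞`, then `limsup_l h(μ_{k_l}) ≤ h(μ)`,
where `h(ν) = inf_n (1/n) H(ν | α^n)`. -/
theorem entropy_upper_semicontinuous (μ : ℕ → Measure (ℕ → ℕ)) (ν : Measure (ℕ → ℕ))
    (hprob : ∀ l, IsProbabilityMeasure (μ l)) (hprobν : IsProbabilityMeasure ν)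
    (hinv : ∀ l, MeasurePreserving shift (μ l) (μ l)) (hinvν : MeasurePreserving shift ν ν)
    (hconv : ∀ g : BoundedContinuousFunction (ℕ → ℕ) ℝ,
      Tendsto (fun l => ∫ x, g x ∂(μ l)) atTop (𝓝 (∫ x, g x ∂ν)))
    (hH : ∀ N : ℕ, ∃ n₀ : ℕ, N ≤ n₀ ∧ 1 ≤ n₀ ∧ partEnt ν n₀ < ⊤ ∧
      Tendsto (fun l => partEnt (μ l) n₀) atTop (𝓝 (partEnt ν n₀))) :
    limsup (fun l => ent (μ l)) atTop ≤ ent ν :=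
  entropy_upper_semicontinuous_general μ ν hprobν hinvν hH
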